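/- (Fixed point of the soft optimality operator dominates all on-policy fixed points.) Let (S, A, 𝒜, p, r, γ) be a finite soft MDP, let Q* be the unique fixed point of the soft Bellman optimality operator T, let π be any policy, and let Q^π be the unique fixed point of T^π. Then Q^π(s,a) ≤ Q*(s,a) for all s ∈ S and a ∈ A. -/

import Mathlib

/-- A finite soft MDP: finite nonempty state space `S`, finite action space `A`,
nonempty allowed-action sets, a transition kernel, a reward, and a discount `0 ≤ γ < 1`. -/
structure SoftMDP (S A : Type) [Fintype S] [Fintype A] where
  act : S → Finset A
  act_nonempty : ∀ s, (act s).Nonempty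
  p : S → A → S → ℝ
  p_nonneg : ∀ s a s', 0 ≤ p s a s'
  p_sum_one : ∀ s a, ∑ s', p s a s' = 1
  r : S → A → ℝ
  γ : ℝ
  γ_nonneg : 0 ≤ γ
  γ_lt_one : γ < 1

/-- A policy: a probability mass function `π(·|s)` on `A` for each state `s`,
supported on the allowed actions `𝒜(s)`. -/
structure Policy {S A : Type} [Fintype S] [Fintype A] (M : SoftMDP S A) where
  pi : S → A → ℝ
  pi_nonneg : ∀ s a, 0 ≤ pi s a
  pi_sum_one : ∀ s, ∑ a, pi s a = 1
  pi_support : ∀ s a, a ∉ M.act s → pi s a = 0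

/-- The on-policy soft Bellman backup operator:
`(T^π Q)(s,a) = r(s,a) + γ ∑_{s'} p(s,a,s') ∑_{a'} π(a'|s') (Q(s',a') − log π(a'|s'))`,
where terms with `π(a'|s') = 0` contribute `0` (as the product vanishes). -/
noncomputable def softBellmanPi {S A : Type} [Fintype S] [Fintype A]
    (M : SoftMDP S A) (π : Policy M) (Q : S → A → ℝ) : S → A → ℝ :=
  fun s a => M.r s a + M.γ * ∑ s', M.p s a s' *
    ∑ a', π.pi s' a' * (Q s' a' - Real.log (π.pi s' a'))


/-- The soft Bellman optimality operator:
`(T Q)(s,a) = r(s,a) + γ ∑_{s'} p(s,a,s') log ∑_{a' ∈ 𝒜(s')} exp Q(s',a')`. -/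
noncomputable def softBellman {S A : Type} [Fintype S] [Fintype A]
    (M : SoftMDP S A) (Q : S → A → ℝ) : S → A → ℝ :=
  fun s a => M.r s a + M.γ * ∑ s', M.p s a s' *
    Real.log (∑ a' ∈ M.act s', Real.exp (Q s' a'))

lemma gibbs_aux {A : Type} [Fintype A] (F : Finset A) (hF : F.Nonempty)
    (w : A → ℝ) (hnn : ∀ a, 0 ≤ w a) (hsum : ∑ a, w a = 1)
    (hsupp : ∀ a, a ∉ F → w a = 0) (x : A → ℝ) :
    ∑ a, w a * (x a - Real.log (w a)) ≤ Real.log (∑ a ∈ F, Real.exp (x a)) := by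
  set Z := ∑ a ∈ F, Real.exp (x a) with hZ
  have hZpos : 0 < Z := Finset.sum_pos (fun a _ => Real.exp_pos _) hF
  have hsumF : ∑ a ∈ F, w a = 1 := by
    rw [← hsum]
    exact Finset.sum_subset (Finset.subset_univ F) (fun a _ ha => hsupp a ha)
  have hrw : ∑ a, w a * (x a - Real.log (w a)) = ∑ a ∈ F, w a * (x a - Real.log (w a)) := by
    symm
    apply Finset.sum_subset (Finset.subset_univ F)
    intro a _ ha
    rw [hsupp a ha]; ring
  rw [hrw]
  have key : ∀ a ∈ F, w a * (x a - Real.log (w a)) ≤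
      Real.exp (x a) / Z - w a + w a * Real.log Z := by
    intro a _
    rcases eq_or_lt_of_le (hnn a) with h | h
    · rw [← h]
      simp
      positivity
    · have hlog : Real.log (Real.exp (x a) / (w a * Z)) ≤ Real.exp (x a) / (w a * Z) - 1 :=
        Real.log_le_sub_one_of_pos (by positivity)
      have hexp : Real.log (Real.exp (x a) / (w a * Z)) = x a - Real.log (w a) - Real.log Z := by
        rw [Real.log_div (Real.exp_ne_zero _) (by positivity), Real.log_exp,
          Real.log_mul (ne_of_gt h) (ne_of_gt hZpos)]
        ring
      have h2 := mul_le_mul_of_nonneg_left (hexp ▸ hlog) (le_of_lt h)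
      have h3 : w a * (Real.exp (x a) / (w a * Z) - 1) = Real.exp (x a) / Z - w a := by
        field_simp
      nlinarith [h2, h3]
  calc ∑ a ∈ F, w a * (x a - Real.log (w a))
      ≤ ∑ a ∈ F, (Real.exp (x a) / Z - w a + w a * Real.log Z) := Finset.sum_le_sum key
    _ = (∑ a ∈ F, Real.exp (x a)) / Z - 1 + Real.log Z := by
        rw [Finset.sum_add_distrib, Finset.sum_sub_distrib, ← Finset.sum_div, hsumF,
          ← Finset.sum_mul, hsumF, one_mul]
    _ = Real.log Z := by rw [← hZ, div_self (ne_of_gt hZpos)]; ring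

/-- Fixed point of the soft optimality operator dominates all on-policy
fixed points: if `Q*` is the fixed point of `T` and `Q^π` the fixed point of `T^π`
for any policy `π`, then `Q^π(s,a) ≤ Q*(s,a)` for all `s, a`. -/
theorem softQ_le_optimal {S A : Type} [Fintype S] [Fintype A]
    (M : SoftMDP S A) (Qstar : S → A → ℝ)
    (hstar : softBellman M Qstar = Qstar)
    (π : Policy M) (Qpi : S → A → ℝ)
    (hpi : softBellmanPi M π Qpi = Qpi) :
    ∀ s a, Qpi s a ≤ Qstar s a := by
  intro s a
  have hne : (Finset.univ : Finset (S × A)).Nonempty := ⟨(s, a), Finset.mem_univ _⟩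
  set D : S × A → ℝ := fun q => Qpi q.1 q.2 - Qstar q.1 q.2 with hD
  set C := Finset.univ.sup' hne D with hC
  have hDC : ∀ s a, Qpi s a - Qstar s a ≤ C := fun s' a' =>
    Finset.le_sup' D (Finset.mem_univ (s', a'))
  -- inner bound: for each s', E s' ≤ L s' + C
  have hinner : ∀ s' : S,
      ∑ a', π.pi s' a' * (Qpi s' a' - Real.log (π.pi s' a'))
        ≤ Real.log (∑ a' ∈ M.act s', Real.exp (Qstar s' a')) + C := by
    intro s'
    have h1 := gibbs_aux (M.act s') (M.act_nonempty s') (π.pi s') (π.pi_nonneg s')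
      (π.pi_sum_one s') (π.pi_support s') (Qpi s')
    have h2 : Real.log (∑ a' ∈ M.act s', Real.exp (Qpi s' a'))
        ≤ Real.log (∑ a' ∈ M.act s', Real.exp (Qstar s' a')) + C := by
      have hmono : ∑ a' ∈ M.act s', Real.exp (Qpi s' a')
          ≤ ∑ a' ∈ M.act s', Real.exp (Qstar s' a' + C) := by
        apply Finset.sum_le_sum
        intro a' _
        exact Real.exp_le_exp.2 (by linarith [hDC s' a'])
      have heq : ∑ a' ∈ M.act s', Real.exp (Qstar s' a' + C)
          = Real.exp C * ∑ a' ∈ M.act s', Real.exp (Qstar s' a') := by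
        rw [Finset.mul_sum]
        exact Finset.sum_congr rfl (fun a' _ => by rw [Real.exp_add]; ring)
      have hpos : 0 < ∑ a' ∈ M.act s', Real.exp (Qpi s' a') :=
        Finset.sum_pos (fun a' _ => Real.exp_pos _) (M.act_nonempty s')
      have hpos2 : 0 < ∑ a' ∈ M.act s', Real.exp (Qstar s' a') :=
        Finset.sum_pos (fun a' _ => Real.exp_pos _) (M.act_nonempty s')
      calc Real.log (∑ a' ∈ M.act s', Real.exp (Qpi s' a'))
          ≤ Real.log (Real.exp C * ∑ a' ∈ M.act s', Real.exp (Qstar s' a')) := by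
            apply Real.log_le_log hpos
            rw [← heq]; exact hmono
        _ = Real.log (∑ a' ∈ M.act s', Real.exp (Qstar s' a')) + C := by
            rw [Real.log_mul (Real.exp_ne_zero _) (ne_of_gt hpos2), Real.log_exp]; ring
    linarith
  have hCle : C ≤ M.γ * C := by
    obtain ⟨q0, -, hq0⟩ := Finset.exists_mem_eq_sup' hne D
    have e1 : Qpi q0.1 q0.2 = softBellmanPi M π Qpi q0.1 q0.2 := by rw [hpi]
    have e2 : Qstar q0.1 q0.2 = softBellman M Qstar q0.1 q0.2 := by rw [hstar]
    have hDq : D q0 = M.γ * ∑ s', M.p q0.1 q0.2 s' *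
        ((∑ a', π.pi s' a' * (Qpi s' a' - Real.log (π.pi s' a')))
          - Real.log (∑ a' ∈ M.act s', Real.exp (Qstar s' a'))) := by
      simp only [hD]
      rw [e1, e2, softBellmanPi, softBellman]
      have hsplit : ∑ s', M.p q0.1 q0.2 s' *
          ((∑ a', π.pi s' a' * (Qpi s' a' - Real.log (π.pi s' a')))
            - Real.log (∑ a' ∈ M.act s', Real.exp (Qstar s' a')))
          = (∑ s', M.p q0.1 q0.2 s' *
              (∑ a', π.pi s' a' * (Qpi s' a' - Real.log (π.pi s' a'))))
            - ∑ s', M.p q0.1 q0.2 s' *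
              Real.log (∑ a' ∈ M.act s', Real.exp (Qstar s' a')) := by
        rw [← Finset.sum_sub_distrib]
        exact Finset.sum_congr rfl (fun s' _ => by ring)
      rw [hsplit]
      ring
    have hstep : ∑ s', M.p q0.1 q0.2 s' *
          ((∑ a', π.pi s' a' * (Qpi s' a' - Real.log (π.pi s' a')))
            - Real.log (∑ a' ∈ M.act s', Real.exp (Qstar s' a'))) ≤ C := by
      calc ∑ s', M.p q0.1 q0.2 s' *
            ((∑ a', π.pi s' a' * (Qpi s' a' - Real.log (π.pi s' a')))
              - Real.log (∑ a' ∈ M.act s', Real.exp (Qstar s' a')))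
          ≤ ∑ s', M.p q0.1 q0.2 s' * C := by
            apply Finset.sum_le_sum
            intro s' _
            exact mul_le_mul_of_nonneg_left (by linarith [hinner s']) (M.p_nonneg _ _ _)
        _ = C := by rw [← Finset.sum_mul, M.p_sum_one, one_mul]
    calc C = D q0 := hq0
      _ ≤ M.γ * C := by
          rw [hDq]
          exact mul_le_mul_of_nonneg_left hstep M.γ_nonneg
  have hC0 : C ≤ 0 := by nlinarith [M.γ_lt_one, M.γ_nonneg]
  linarith [hDC s a]
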